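/- arXiv:1505.03410 — 9 statements merged into one kernel-verified Lean document; each statement's English description precedes it below -/
import Mathlib

section
/- The dual optimal solution of the Lasso is the Euclidean projection of y/λ onto the dual feasible set: θ̂ = Π_{Δ_X}(y/λ), where Δ_X = {θ ∈ ℝⁿ : |x_jᵀθ| ≤ 1 for all j}. In particular the dual optimal solution is unique. -/
open scoped BigOperators

/-- The dual optimal solution of the Lasso (maximizer of the dual
objective over the dual feasible set) is the Euclidean projection of `y/λ` onto
the dual feasible set `Δ_X = {θ | |x_jᵀθ| ≤ 1 ∀ j}`; in particular it is unique. -/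
theorem lasso_dual_opt_is_projection {n p : ℕ}
    (X : Matrix (Fin n) (Fin p) ℝ) (y : EuclideanSpace ℝ (Fin n))
    (lam : ℝ) (hlam : 0 < lam)
    (Δ : Set (EuclideanSpace ℝ (Fin n)))
    (hΔ : Δ = {θ | ∀ j, |∑ i, X i j * θ i| ≤ 1})
    (D : EuclideanSpace ℝ (Fin n) → ℝ)
    (hD : ∀ θ, D θ = (1/2) * ‖y‖^2 - (lam^2/2) * ‖θ - (1/lam) • y‖^2)
    (θh : EuclideanSpace ℝ (Fin n))
    (hfeas : θh ∈ Δ) (hopt : ∀ θ ∈ Δ, D θ ≤ D θh) :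
    (∀ θ ∈ Δ, ‖θh - (1/lam) • y‖ ≤ ‖θ - (1/lam) • y‖) ∧
    (∀ θ' ∈ Δ, (∀ θ ∈ Δ, D θ ≤ D θ') → θ' = θh) := by
  set c : EuclideanSpace ℝ (Fin n) := (1/lam) • y with hc
  have hlam2 : 0 < lam^2/2 := by positivity
  -- D comparison ↔ norm comparison
  have key : ∀ θ θ' : EuclideanSpace ℝ (Fin n),
      D θ ≤ D θ' → ‖θ' - c‖ ≤ ‖θ - c‖ := by
    intro θ θ' h
    rw [hD, hD] at h
    have hsq : ‖θ' - c‖^2 ≤ ‖θ - c‖^2 := by nlinarith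
    nlinarith [norm_nonneg (θ' - c), norm_nonneg (θ - c)]
  have hmin : ∀ θ ∈ Δ, ‖θh - c‖ ≤ ‖θ - c‖ := fun θ hθ => key θ θh (hopt θ hθ)
  refine ⟨hmin, ?_⟩
  intro θ' hθ' hopt'
  -- both have equal distance
  have h1 : ‖θh - c‖ ≤ ‖θ' - c‖ := hmin θ' hθ'
  have h2 : ‖θ' - c‖ ≤ ‖θh - c‖ := key θh θ' (hopt' θh hfeas)
  have heq : ‖θ' - c‖ = ‖θh - c‖ := le_antisymm h2 h1
  -- midpoint is feasible
  have hmid : (2⁻¹ : ℝ) • (θh + θ') ∈ Δ := by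
    rw [hΔ]
    intro j
    have hh := hΔ ▸ hfeas
    have hh' := hΔ ▸ hθ'
    have ha : |∑ i, X i j * θh i| ≤ 1 := hh j
    have hb : |∑ i, X i j * θ' i| ≤ 1 := hh' j
    have : ∑ i, X i j * ((2⁻¹ : ℝ) • (θh + θ')) i
        = (2⁻¹ : ℝ) * ((∑ i, X i j * θh i) + (∑ i, X i j * θ' i)) := by
      rw [mul_add, Finset.mul_sum, Finset.mul_sum, ← Finset.sum_add_distrib]
      refine Finset.sum_congr rfl fun i _ => ?_
      simp only [PiLp.smul_apply, PiLp.add_apply, smul_eq_mul]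
      ring
    rw [this]
    calc |(2⁻¹ : ℝ) * ((∑ i, X i j * θh i) + (∑ i, X i j * θ' i))|
        = 2⁻¹ * |(∑ i, X i j * θh i) + (∑ i, X i j * θ' i)| := by
          rw [abs_mul]; norm_num
      _ ≤ 2⁻¹ * (|∑ i, X i j * θh i| + |∑ i, X i j * θ' i|) := by
          have := abs_add_le (∑ i, X i j * θh i) (∑ i, X i j * θ' i)
          linarith
      _ ≤ 1 := by linarith
  have hmidge : ‖θh - c‖ ≤ ‖(2⁻¹ : ℝ) • (θh + θ') - c‖ := hmin _ hmid
  -- parallelogram law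
  have hpar := parallelogram_law_with_norm ℝ (θh - c) (θ' - c)
  have hsum : (θh - c) + (θ' - c) = (2 : ℝ) • ((2⁻¹ : ℝ) • (θh + θ') - c) := by
    rw [smul_sub, smul_smul]
    norm_num
    module
  have hnsum : ‖(θh - c) + (θ' - c)‖ = 2 * ‖(2⁻¹ : ℝ) • (θh + θ') - c‖ := by
    rw [hsum, norm_smul]
    simp
  have hdiff : (θh - c) - (θ' - c) = θh - θ' := by abel
  have hz : ‖θh - θ'‖ = 0 := by
    have h4 : (2 * ‖(2⁻¹ : ℝ) • (θh + θ') - c‖)^2 + ‖θh - θ'‖^2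
        = 2 * (‖θh - c‖^2 + ‖θ' - c‖^2) := by
      rw [← hnsum, ← hdiff]
      simpa [pow_two] using hpar
    rw [heq] at h4
    nlinarith [norm_nonneg (θh - θ'), norm_nonneg (θh - c),
      norm_nonneg ((2⁻¹ : ℝ) • (θh + θ') - c)]
  have : θh - θ' = 0 := norm_eq_zero.mp hz
  have : θh = θ' := by
    have := sub_eq_zero.mp this
    exact this
  exact this.symm
end

section
/- Safe sphere test: let θ̂ be the dual optimal Lasso solution and suppose θ̂ ∈ B(c, r) for some c ∈ ℝⁿ, r ≥ 0. If |x_jᵀc| + r‖x_j‖ < 1, then β̂_j = 0 for every primal optimal solution β̂. -/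
/-!
Perturbing an optimal `β̂` along the coordinate direction `e_k` and letting the step size tend
to zero shows that `θ = (y - Xβ̂)/λ` satisfies `|x_kᵀθ| ≤ 1`, with `β̂_k x_kᵀθ = |β̂_k|`.
Hence `θ` is dual feasible and `⟨Xβ̂, θ⟩ = ‖β̂‖₁ ≥ ⟨Xβ̂, θ'⟩` for every feasible `θ'`: this is the
variational inequality of the projection of `y/λ` onto the feasible set, so `θ = θ̂`.
If `β̂_j ≠ 0` then `|x_jᵀθ̂| = 1`, whereas Cauchy–Schwarz on the ball gives
`|x_jᵀθ̂| ≤ |x_jᵀc| + r‖x_j‖ < 1`.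
-/

open scoped BigOperators

def toE {n : ℕ} (v : Fin n → ℝ) : EuclideanSpace ℝ (Fin n) := WithLp.toLp 2 v

open Filter Topology
open scoped RealInnerProductSpace Matrix

lemma le_of_forall_le_add_mul {a b K : ℝ} (h : ∀ s, 0 < s → s ≤ 1 → a ≤ b + s * K) : a ≤ b := by
  have hlim : Tendsto (fun s => b + s * K) (𝓝[>] 0) (𝓝 b) := by
    have : Continuous fun s : ℝ => b + s * K := by fun_prop
    simpa using (this.tendsto 0).mono_left nhdsWithin_le_nhds
  refine ge_of_tendsto hlim ?_
  filter_upwards [Ioc_mem_nhdsGT one_pos] with s hs using h s hs.1 hs.2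

/-- The conclusion says that `g ∈ lam • ∂|·|(b)`. -/
lemma abs_le_and_mul_eq_of_forall_mul_le {lam b g C : ℝ} (hlam : 0 ≤ lam)
    (h : ∀ t, t * g ≤ lam * (|b + t| - |b|) + C * t ^ 2) : |g| ≤ lam ∧ b * g = lam * |b| := by
  have h' (t : ℝ) : t * g ≤ lam * |t| + C * t ^ 2 :=
    (h t).trans (by gcongr; linarith [abs_add_le b t])
  have hg : |g| ≤ lam := by
    refine abs_le.2 ⟨?_, ?_⟩ <;> refine le_of_forall_le_add_mul (K := C) fun s hs _ => ?_
    · have := h' (-s)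
      rw [abs_neg, abs_of_pos hs] at this
      nlinarith
    · have := h' s
      rw [abs_of_pos hs] at this
      nlinarith
  refine ⟨hg, le_antisymm ?_ ?_⟩
  · calc b * g ≤ |b| * |g| := by rw [← abs_mul]; exact le_abs_self _
      _ ≤ lam * |b| := by rw [mul_comm]; gcongr
  · refine le_of_forall_le_add_mul (K := C * b ^ 2) fun s hs hs1 => ?_
    have := h (-(s * b))
    rw [show b + -(s * b) = (1 - s) * b by ring, abs_mul, abs_of_nonneg (by linarith : 0 ≤ 1 - s)] at this
    nlinarith

lemma eq_of_norm_sub_le_of_inner_nonneg {E : Type*} [NormedAddCommGroup E] [InnerProductSpace ℝ E]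
    {z v w : E} (hv : 0 ≤ ⟪v - z, w - v⟫) (hw : ‖w - z‖ ≤ ‖v - z‖) : w = v := by
  have hexp : ‖w - z‖ ^ 2 = ‖v - z‖ ^ 2 + 2 * ⟪v - z, w - v⟫ + ‖w - v‖ ^ 2 := by
    rw [← norm_add_sq_real, sub_add_sub_cancel']
  have : ‖w - v‖ ^ 2 ≤ 0 := by nlinarith [norm_nonneg (w - z)]
  rw [← sub_eq_zero, ← norm_eq_zero]
  exact pow_eq_zero_iff two_ne_zero |>.mp (le_antisymm this (sq_nonneg _))

lemma abs_inner_le_of_norm_sub_le {E : Type*} [NormedAddCommGroup E] [InnerProductSpace ℝ E]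
    (x : E) {θ c : E} {r : ℝ} (h : ‖θ - c‖ ≤ r) : |⟪x, θ⟫| ≤ |⟪x, c⟫| + r * ‖x‖ := by
  calc |⟪x, θ⟫| = |⟪x, c⟫ + ⟪x, θ - c⟫| := by rw [inner_sub_right, add_sub_cancel]
    _ ≤ |⟪x, c⟫| + ‖x‖ * ‖θ - c‖ := (abs_add_le _ _).trans (by gcongr; exact abs_real_inner_le_norm _ _)
    _ ≤ |⟪x, c⟫| + r * ‖x‖ := by rw [mul_comm]; gcongr

noncomputable section

namespace Lasso

variable {n p : ℕ} (X : Matrix (Fin n) (Fin p) ℝ) (y : EuclideanSpace ℝ (Fin n)) (lam : ℝ)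

def objective (β : Fin p → ℝ) : ℝ := (1 / 2) * ‖toE (X *ᵥ β) - y‖ ^ 2 + lam * ∑ j, |β j|

def dualFeasible : Set (EuclideanSpace ℝ (Fin n)) := {θ | ∀ j, |∑ i, X i j * θ i| ≤ 1}

def dualPoint (β : Fin p → ℝ) : EuclideanSpace ℝ (Fin n) := (1 / lam) • (y - toE (X *ᵥ β))

lemma inner_toE_col (k : Fin p) (u : EuclideanSpace ℝ (Fin n)) :
    ⟪toE (X.col k), u⟫ = ∑ i, X i k * u i := by
  simp [toE, PiLp.inner_apply, mul_comm]

lemma mem_dualFeasible {θ : EuclideanSpace ℝ (Fin n)} :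
    θ ∈ dualFeasible X ↔ ∀ k, |⟪toE (X.col k), θ⟫| ≤ 1 := by
  simp only [inner_toE_col]; rfl

lemma inner_toE_mulVec (β : Fin p → ℝ) (u : EuclideanSpace ℝ (Fin n)) :
    ⟪toE (X *ᵥ β), u⟫ = ∑ k, β k * ⟪toE (X.col k), u⟫ := by
  simp only [Matrix.mulVec_eq_sum, op_smul_eq_smul, toE, WithLp.toLp_sum, WithLp.toLp_smul,
    sum_inner, real_inner_smul_left]
  rfl

lemma objective_add_single (β : Fin p → ℝ) (k : Fin p) (t : ℝ) :
    objective X y lam (β + Pi.single k t) = objective X y lam β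
      - t * ⟪toE (X.col k), y - toE (X *ᵥ β)⟫ + ‖toE (X.col k)‖ ^ 2 / 2 * t ^ 2
      + lam * (|β k + t| - |β k|) := by
  have hres : toE (X *ᵥ (β + Pi.single k t)) - y = (toE (X *ᵥ β) - y) + t • toE (X.col k) := by
    rw [Matrix.mulVec_add, Matrix.mulVec_single, op_smul_eq_smul]
    simp only [toE, WithLp.toLp_add, WithLp.toLp_smul]
    abel
  have hsum : ∑ l, |(β + Pi.single k t : Fin p → ℝ) l| = ∑ l, |β l| + (|β k + t| - |β k|) := by
    rw [← sub_eq_iff_eq_add', ← Finset.sum_sub_distrib, Fintype.sum_eq_single k]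
    · simp
    · intro l hl; simp [hl]
  have hinner : ⟪toE (X *ᵥ β) - y, toE (X.col k)⟫ = -⟪toE (X.col k), y - toE (X *ᵥ β)⟫ := by
    rw [real_inner_comm, ← inner_neg_right, neg_sub]
  simp only [objective, hres, hsum, norm_add_sq_real, norm_smul, inner_smul_right, hinner,
    Real.norm_eq_abs, mul_pow, sq_abs]
  ring

variable {X y lam}

lemma abs_inner_col_dualPoint_le_and_mul_eq (hlam : 0 < lam) {β : Fin p → ℝ}
    (hβ : ∀ β', objective X y lam β ≤ objective X y lam β') (k : Fin p) :
    |⟪toE (X.col k), dualPoint X y lam β⟫| ≤ 1 ∧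
      β k * ⟪toE (X.col k), dualPoint X y lam β⟫ = |β k| := by
  set g := ⟪toE (X.col k), y - toE (X *ᵥ β)⟫
  have hg : |g| ≤ lam ∧ β k * g = lam * |β k| := by
    refine abs_le_and_mul_eq_of_forall_mul_le hlam.le (C := ‖toE (X.col k)‖ ^ 2 / 2) fun t => ?_
    have := hβ (β + Pi.single k t)
    rw [objective_add_single] at this
    linarith
  have hθ : ⟪toE (X.col k), dualPoint X y lam β⟫ = g / lam := by
    rw [dualPoint, inner_smul_right]; ring
  rw [hθ, abs_div, abs_of_pos hlam, div_le_one hlam, mul_div_assoc', div_eq_iff hlam.ne']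
  exact ⟨hg.1, by linarith [hg.2]⟩

lemma abs_inner_col_dualPoint_eq_one (hlam : 0 < lam) {β : Fin p → ℝ}
    (hβ : ∀ β', objective X y lam β ≤ objective X y lam β') {k : Fin p} (hk : β k ≠ 0) :
    |⟪toE (X.col k), dualPoint X y lam β⟫| = 1 := by
  have h := congrArg abs (abs_inner_col_dualPoint_le_and_mul_eq hlam hβ k).2
  rw [abs_mul, abs_abs] at h
  exact (mul_eq_left₀ (abs_ne_zero.2 hk)).1 h

lemma dualPoint_mem_dualFeasible (hlam : 0 < lam) {β : Fin p → ℝ}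
    (hβ : ∀ β', objective X y lam β ≤ objective X y lam β') :
    dualPoint X y lam β ∈ dualFeasible X :=
  (mem_dualFeasible X).2 fun k => (abs_inner_col_dualPoint_le_and_mul_eq hlam hβ k).1

lemma inner_toE_mulVec_le_of_mem_dualFeasible (β : Fin p → ℝ) {θ : EuclideanSpace ℝ (Fin n)}
    (hθ : θ ∈ dualFeasible X) : ⟪toE (X *ᵥ β), θ⟫ ≤ ∑ k, |β k| := by
  rw [inner_toE_mulVec]
  refine Finset.sum_le_sum fun k _ => ?_
  calc β k * ⟪toE (X.col k), θ⟫ ≤ |β k| * |⟪toE (X.col k), θ⟫| := by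
        rw [← abs_mul]; exact le_abs_self _
    _ ≤ |β k| := mul_le_of_le_one_right (abs_nonneg _) ((mem_dualFeasible X).1 hθ k)

lemma inner_toE_mulVec_dualPoint (hlam : 0 < lam) {β : Fin p → ℝ}
    (hβ : ∀ β', objective X y lam β ≤ objective X y lam β') :
    ⟪toE (X *ᵥ β), dualPoint X y lam β⟫ = ∑ k, |β k| := by
  rw [inner_toE_mulVec]
  exact Finset.sum_congr rfl fun k _ => (abs_inner_col_dualPoint_le_and_mul_eq hlam hβ k).2

lemma eq_dualPoint_of_forall_norm_sub_le (hlam : 0 < lam) {β : Fin p → ℝ}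
    (hβ : ∀ β', objective X y lam β ≤ objective X y lam β') {θ : EuclideanSpace ℝ (Fin n)}
    (hθ : θ ∈ dualFeasible X)
    (hmin : ∀ θ' ∈ dualFeasible X, ‖θ - (1 / lam) • y‖ ≤ ‖θ' - (1 / lam) • y‖) :
    θ = dualPoint X y lam β := by
  refine eq_of_norm_sub_le_of_inner_nonneg ?_ (hmin _ (dualPoint_mem_dualFeasible hlam hβ))
  have hres : dualPoint X y lam β - (1 / lam) • y = -((1 / lam) • toE (X *ᵥ β)) := by
    rw [dualPoint, smul_sub]; abel
  rw [hres, inner_neg_left, real_inner_smul_left, inner_sub_right,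
    inner_toE_mulVec_dualPoint hlam hβ, neg_nonneg]
  exact mul_nonpos_of_nonneg_of_nonpos (by positivity)
    (sub_nonpos.2 (inner_toE_mulVec_le_of_mem_dualFeasible β hθ))

end Lasso

end

theorem lasso_safe_sphere_test_general {n p : ℕ}
    (X : Matrix (Fin n) (Fin p) ℝ) (y : EuclideanSpace ℝ (Fin n))
    (lam : ℝ) (hlam : 0 < lam)
    (Δ : Set (EuclideanSpace ℝ (Fin n)))
    (hΔ : Δ = {θ | ∀ j, |∑ i, X i j * θ i| ≤ 1})
    (P : (Fin p → ℝ) → ℝ)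
    (hP : ∀ β, P β = (1/2) * ‖toE (X.mulVec β) - y‖^2 + lam * ∑ j, |β j|)
    (θh : EuclideanSpace ℝ (Fin n))
    (hfeas : θh ∈ Δ)
    (hproj : ∀ θ ∈ Δ, ‖θh - (1/lam) • y‖ ≤ ‖θ - (1/lam) • y‖)
    (c : EuclideanSpace ℝ (Fin n)) (r : ℝ)
    (hball : ‖θh - c‖ ≤ r)
    (j : Fin p)
    (htest : |∑ i, X i j * c i| + r * ‖toE (fun i => X i j)‖ < 1) :
    ∀ βh : Fin p → ℝ, (∀ β, P βh ≤ P β) → βh j = 0 := by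
  intro βh hopt
  obtain rfl : Δ = Lasso.dualFeasible X := hΔ
  obtain rfl : P = Lasso.objective X y lam := funext hP
  have hθh : θh = Lasso.dualPoint X y lam βh :=
    Lasso.eq_dualPoint_of_forall_norm_sub_le hlam hopt hfeas hproj
  have hsphere : |⟪toE (X.col j), θh⟫| < 1 := by
    have h := abs_inner_le_of_norm_sub_le (toE (X.col j)) hball
    rw [Lasso.inner_toE_col X j c] at h
    exact h.trans_lt htest
  by_contra hβj
  rw [hθh, Lasso.abs_inner_col_dualPoint_eq_one hlam hopt hβj] at hsphere
  exact lt_irrefl 1 hsphere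

/-- Safe sphere test. If the dual optimal solution `θ̂` (the projection
of `y/λ` onto the dual feasible set) lies in the ball `B(c, r)` and
`|x_jᵀc| + r‖x_j‖ < 1`, then `β̂_j = 0` for every primal optimal `β̂`. -/
theorem lasso_safe_sphere_test {n p : ℕ}
    (X : Matrix (Fin n) (Fin p) ℝ) (y : EuclideanSpace ℝ (Fin n))
    (lam : ℝ) (hlam : 0 < lam)
    (Δ : Set (EuclideanSpace ℝ (Fin n)))
    (hΔ : Δ = {θ | ∀ j, |∑ i, X i j * θ i| ≤ 1})
    (P : (Fin p → ℝ) → ℝ)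
    (hP : ∀ β, P β = (1/2) * ‖toE (X.mulVec β) - y‖^2 + lam * ∑ j, |β j|)
    (θh : EuclideanSpace ℝ (Fin n))
    (hfeas : θh ∈ Δ)
    (hproj : ∀ θ ∈ Δ, ‖θh - (1/lam) • y‖ ≤ ‖θ - (1/lam) • y‖)
    (c : EuclideanSpace ℝ (Fin n)) (r : ℝ) (hr : 0 ≤ r)
    (hball : ‖θh - c‖ ≤ r)
    (j : Fin p)
    (htest : |∑ i, X i j * c i| + r * ‖toE (fun i => X i j)‖ < 1) :
    ∀ βh : Fin p → ℝ, (∀ β, P βh ≤ P β) → βh j = 0 :=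
  lasso_safe_sphere_test_general X y lam hlam Δ hΔ P hP θh hfeas hproj c r hball j htest
end

section
/- Static safe ball: the ball with center y/λ and radius ‖y‖·|1/λ − 1/λ_max| contains the dual optimal Lasso solution θ̂ = Π_{Δ_X}(y/λ), where λ_max = ‖Xᵀy‖_∞. -/
open scoped BigOperators

/-- static safe ball. The ball centered at `y/λ` with radius
`‖y‖·|1/λ − 1/λ_max|` contains the dual optimal solution
`θ̂ = Π_{Δ_X}(y/λ)`, where `λ_max = ‖Xᵀy‖_∞`. -/
theorem lasso_static_safe_ball {n p : ℕ}
    (X : Matrix (Fin n) (Fin p) ℝ) (y : EuclideanSpace ℝ (Fin n))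
    (hy : y ≠ 0)
    (lam lamMax : ℝ)
    (hmax : lamMax = ⨆ j : Fin p, |∑ i, X i j * y i|)
    (hlam : 0 < lam) (hle : lam ≤ lamMax)
    (Δ : Set (EuclideanSpace ℝ (Fin n)))
    (hΔ : Δ = {θ | ∀ j, |∑ i, X i j * θ i| ≤ 1})
    (θh : EuclideanSpace ℝ (Fin n))
    (hfeas : θh ∈ Δ)
    (hproj : ∀ θ ∈ Δ, ‖θh - (1/lam) • y‖ ≤ ‖θ - (1/lam) • y‖) :
    ‖θh - (1/lam) • y‖ ≤ ‖y‖ * |1/lam - 1/lamMax| := by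
  have hlamMax : 0 < lamMax := lt_of_lt_of_le hlam hle
  have hmem : (1/lamMax) • y ∈ Δ := by
    rw [hΔ]
    intro j
    have hb : |∑ i, X i j * y i| ≤ lamMax := by
      rw [hmax]
      exact le_ciSup (f := fun j : Fin p => |∑ i, X i j * y i|) (Finite.bddAbove_range _) j
    have : ∑ i, X i j * ((1/lamMax) • y) i = (1/lamMax) * ∑ i, X i j * y i := by
      rw [Finset.mul_sum]
      apply Finset.sum_congr rfl
      intro i _
      simp [PiLp.smul_apply, smul_eq_mul]
      ring
    rw [this, abs_mul, abs_of_pos (by positivity : (0:ℝ) < 1/lamMax)]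
    rw [div_mul_eq_mul_div, one_mul, div_le_one hlamMax]
    exact hb
  calc ‖θh - (1/lam) • y‖ ≤ ‖(1/lamMax) • y - (1/lam) • y‖ := hproj _ hmem
    _ = ‖y‖ * |1/lam - 1/lamMax| := by
        rw [← sub_smul, norm_smul, Real.norm_eq_abs, ← abs_neg, neg_sub, mul_comm]
end

section
/- GAP SAFE ball (Theorem 2): for any β ∈ ℝᵖ and θ ∈ Δ_X, letting r = (1/λ)·√((‖y‖² − ‖Xβ − y‖² − 2λ‖β‖₁)₊) and R = ‖θ − y/λ‖, the dual optimal solution θ̂ satisfies ‖θ̂ − θ‖ ≤ √(R² − r²). -/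
/-!
The dual optimum `θ̂` is the projection of `y/λ` onto the convex set `Δ_X`, so for every feasible
`θ` the angle at `θ̂` in the triangle `θ, θ̂, y/λ` is obtuse:
`‖θ̂ - θ‖² + ‖θ̂ - y/λ‖² ≤ ‖θ - y/λ‖² = R²`.
Weak duality between the Lasso primal at `β` and the dual at the feasible point `θ̂` gives
`r ≤ ‖θ̂ - y/λ‖`, hence `‖θ̂ - θ‖² ≤ R² - r²`.
-/

open scoped BigOperators RealInnerProductSpace
open Matrix

theorem convex_setOf_forall_abs_sum_mul_le_one {n p : ℕ} (X : Matrix (Fin n) (Fin p) ℝ) :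
    Convex ℝ {θ : EuclideanSpace ℝ (Fin n) | ∀ j, |∑ i, X i j * θ i| ≤ 1} := by
  have hpreimage : {θ : EuclideanSpace ℝ (Fin n) | ∀ j, |∑ i, X i j * θ i| ≤ 1} =
      (toLin' Xᵀ ∘ₗ (WithLp.linearEquiv 2 ℝ (Fin n → ℝ)).toLinearMap) ⁻¹'
        Metric.closedBall 0 1 := by
    ext θ
    simp [pi_norm_le_iff_of_nonneg, mulVec, dotProduct]
  rw [hpreimage]
  exact (convex_closedBall 0 1).linear_preimage _

theorem inner_toE_mulVec {n p : ℕ} (X : Matrix (Fin n) (Fin p) ℝ) (β : Fin p → ℝ)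
    (θ : EuclideanSpace ℝ (Fin n)) : ⟪toE (X *ᵥ β), θ⟫ = β ⬝ᵥ (Xᵀ *ᵥ θ.ofLp) := by
  rw [EuclideanSpace.inner_eq_star_dotProduct, dotProduct_comm, dotProduct_mulVec,
    vecMul_transpose]
  simp [toE, dotProduct_comm]

theorem inner_toE_mulVec_le_sum_abs {n p : ℕ} (X : Matrix (Fin n) (Fin p) ℝ) (β : Fin p → ℝ)
    {θ : EuclideanSpace ℝ (Fin n)} (hθ : ∀ j, |∑ i, X i j * θ i| ≤ 1) :
    ⟪toE (X *ᵥ β), θ⟫ ≤ ∑ j, |β j| := by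
  rw [inner_toE_mulVec, dotProduct]
  refine Finset.sum_le_sum fun j _ => ?_
  calc β j * (Xᵀ *ᵥ θ.ofLp) j ≤ |β j| * |(Xᵀ *ᵥ θ.ofLp) j| := by
        rw [← abs_mul]; exact le_abs_self _
    _ ≤ |β j| * 1 := by gcongr; exact hθ j
    _ = |β j| := mul_one _

section InnerProductSpace

variable {F : Type*} [NormedAddCommGroup F] [InnerProductSpace ℝ F]

theorem norm_sub_sq_add_norm_sub_sq_le_of_nearest {K : Set F} (hK : Convex ℝ K) {c p q : F}
    (hp : p ∈ K) (hnearest : ∀ w ∈ K, ‖p - c‖ ≤ ‖w - c‖) (hq : q ∈ K) :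
    ‖p - q‖ ^ 2 + ‖p - c‖ ^ 2 ≤ ‖q - c‖ ^ 2 := by
  have hbdd : BddBelow (Set.range fun w : K => ‖c - w‖) :=
    ⟨0, by rintro _ ⟨w, rfl⟩; exact norm_nonneg _⟩
  have : Nonempty K := ⟨⟨p, hp⟩⟩
  have hiInf : ‖c - p‖ = ⨅ w : K, ‖c - w‖ :=
    le_antisymm (le_ciInf fun w => by simpa only [norm_sub_rev c] using hnearest w w.2)
      (ciInf_le hbdd ⟨p, hp⟩)
  have hobtuse : ⟪c - p, q - p⟫ ≤ 0 := (norm_eq_iInf_iff_real_inner_le_zero hK hp).mp hiInf q hq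
  have hexpand : ‖q - c‖ ^ 2 = ‖q - p‖ ^ 2 - 2 * ⟪c - p, q - p⟫ + ‖p - c‖ ^ 2 := by
    rw [← sub_add_sub_cancel q p c, norm_add_sq_real, ← neg_sub c p, inner_neg_right,
      real_inner_comm]
    ring
  rw [hexpand, norm_sub_rev p q]
  linarith

/-- For `v = Xβ` and `S = ‖β‖₁` this is `D(θ) ≤ P(β)` for the Lasso primal
`P(β) = ½‖Xβ - y‖² + λ‖β‖₁` and dual `D(θ) = ½‖y‖² - (λ²/2)‖θ - y/λ‖²`. -/
theorem lasso_weak_duality {v y θ : F} {lam S : ℝ} (hlam : 0 < lam) (hvθ : ⟪v, θ⟫ ≤ S) :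
    ‖y‖ ^ 2 - ‖v - y‖ ^ 2 - 2 * lam * S ≤ lam ^ 2 * ‖θ - (1 / lam) • y‖ ^ 2 := by
  have hscale : lam ^ 2 * ‖θ - (1 / lam) • y‖ ^ 2 = ‖lam • θ - y‖ ^ 2 := by
    rw [← mul_pow, ← abs_of_pos hlam, ← Real.norm_eq_abs, ← norm_smul, smul_sub, smul_smul,
      Real.norm_eq_abs, abs_of_pos hlam, mul_one_div_cancel hlam.ne', one_smul]
  have hsquare : ‖lam • θ - y‖ ^ 2 - ‖y‖ ^ 2 + ‖v - y‖ ^ 2 + 2 * lam * ⟪v, θ⟫ =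
      ‖v + lam • θ - y‖ ^ 2 := by
    simp only [← real_inner_self_eq_norm_sq, inner_add_left, inner_add_right, inner_sub_left,
      inner_sub_right, real_inner_smul_left, real_inner_smul_right]
    rw [real_inner_comm v y, real_inner_comm θ y, real_inner_comm θ v]
    ring
  nlinarith [sq_nonneg ‖v + lam • θ - y‖]

end InnerProductSpace

/-- Theorem 2, GAP SAFE ball: for any `β ∈ ℝᵖ` and dual feasible
`θ`, with `r = (1/λ)√((‖y‖² − ‖Xβ − y‖² − 2λ‖β‖₁)₊)` and `R = ‖θ − y/λ‖`,
the dual optimal solution `θ̂ = Π_{Δ_X}(y/λ)` satisfies `‖θ̂ − θ‖ ≤ √(R² − r²)`. -/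
theorem lasso_gap_safe_ball {n p : ℕ}
    (X : Matrix (Fin n) (Fin p) ℝ) (y : EuclideanSpace ℝ (Fin n))
    (lam : ℝ) (hlam : 0 < lam)
    (Δ : Set (EuclideanSpace ℝ (Fin n)))
    (hΔ : Δ = {θ | ∀ j, |∑ i, X i j * θ i| ≤ 1})
    (θh : EuclideanSpace ℝ (Fin n))
    (hfeas : θh ∈ Δ)
    (hproj : ∀ θ' ∈ Δ, ‖θh - (1/lam) • y‖ ≤ ‖θ' - (1/lam) • y‖)
    (β : Fin p → ℝ) (θ : EuclideanSpace ℝ (Fin n)) (hθ : θ ∈ Δ)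
    (r R : ℝ)
    (hr : r = (1/lam) * Real.sqrt
      (max (‖y‖^2 - ‖toE (X.mulVec β) - y‖^2 - 2 * lam * ∑ j, |β j|) 0))
    (hR : R = ‖θ - (1/lam) • y‖) :
    ‖θh - θ‖ ≤ Real.sqrt (R^2 - r^2) := by
  have hconv : Convex ℝ Δ := hΔ ▸ convex_setOf_forall_abs_sum_mul_le_one X
  have hobtuse := norm_sub_sq_add_norm_sub_sq_le_of_nearest hconv hfeas hproj hθ
  have hduality := lasso_weak_duality (y := y) hlam
    (inner_toE_mulVec_le_sum_abs X β (θ := θh) (by rwa [hΔ] at hfeas))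
  have hr_le : r ^ 2 ≤ ‖θh - (1 / lam) • y‖ ^ 2 := by
    rw [hr, mul_pow, Real.sq_sqrt (le_max_right _ _)]
    calc (1 / lam) ^ 2 * max _ 0
        ≤ (1 / lam) ^ 2 * (lam ^ 2 * ‖θh - (1 / lam) • y‖ ^ 2) := by
          gcongr
          exact max_le hduality (by positivity)
      _ = ‖θh - (1 / lam) • y‖ ^ 2 := by field_simp
  exact Real.le_sqrt_of_sq_le (by rw [hR]; linarith)
end

section
/- Geometric annulus lemma: let c ∈ ℝⁿ, 0 ≤ r ≤ R, and let θ, θ̂ ∈ ℝⁿ be such that the whole segment [θ, θ̂] is contained in the annulus {z : r ≤ ‖z − c‖ ≤ R} and θ̂ is a closest point of the segment to c. Then ‖θ − θ̂‖ ≤ √(R² − r²). -/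
/-!
Write `v = θ - θ̂` and `w = θ̂ - c`. Since `θ̂` minimises `‖· - c‖` on the segment, moving from
`θ̂` towards `θ` cannot decrease the distance to `c`, and the first-order condition is
`0 ≤ ⟪v, w⟫`. The angle at `θ̂` in the triangle `θ θ̂ c` is therefore not acute, so
`‖v‖² + ‖w‖² ≤ ‖θ - c‖²`, and the annulus bounds `r ≤ ‖w‖`, `‖θ - c‖ ≤ R` give `‖v‖² ≤ R² - r²`.
-/

open Filter Topology Set RealInnerProductSpace

section InnerProductSpace

variable {E : Type*} [NormedAddCommGroup E] [InnerProductSpace ℝ E]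

theorem inner_nonneg_of_forall_norm_le_norm_add_smul {v w : E}
    (h : ∀ t ∈ Ioc (0 : ℝ) 1, ‖w‖ ≤ ‖w + t • v‖) : 0 ≤ ⟪v, w⟫ := by
  have hquot : ∀ t ∈ Ioc (0 : ℝ) 1, 0 ≤ 2 * ⟪v, w⟫ + t * ‖v‖ ^ 2 := by
    intro t ht
    have hsq : ‖w‖ ^ 2 ≤ ‖w + t • v‖ ^ 2 := pow_le_pow_left₀ (norm_nonneg _) (h t ht) 2
    rw [norm_add_sq_real, norm_smul, real_inner_smul_right, real_inner_comm, mul_pow,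
      Real.norm_eq_abs, sq_abs] at hsq
    nlinarith [ht.1]
  have hlim : Tendsto (fun t : ℝ => 2 * ⟪v, w⟫ + t * ‖v‖ ^ 2) (𝓝[>] 0)
      (𝓝 (2 * ⟪v, w⟫)) := by
    refine tendsto_nhdsWithin_of_tendsto_nhds ?_
    simpa using ((continuous_id.mul continuous_const).const_add (2 * ⟪v, w⟫)).tendsto 0
  have hzero_le := ge_of_tendsto hlim (eventually_of_mem (Ioc_mem_nhdsGT one_pos) hquot)
  linarith

theorem norm_sq_add_norm_sq_le_norm_add_sq_of_inner_nonneg {x y : E} (h : 0 ≤ ⟪x, y⟫) :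
    ‖x‖ ^ 2 + ‖y‖ ^ 2 ≤ ‖x + y‖ ^ 2 := by
  rw [norm_add_sq_real]
  linarith

end InnerProductSpace

theorem annulus_segment_bound_general {n : ℕ}
    (c θ θh : EuclideanSpace ℝ (Fin n)) (r R : ℝ)
    (hr : 0 ≤ r)
    (hseg : ∀ t ∈ Set.Icc (0:ℝ) 1,
      r ≤ ‖(1 - t) • θ + t • θh - c‖ ∧ ‖(1 - t) • θ + t • θh - c‖ ≤ R)
    (hclosest : ∀ t ∈ Set.Icc (0:ℝ) 1,
      ‖θh - c‖ ≤ ‖(1 - t) • θ + t • θh - c‖) :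
    ‖θ - θh‖ ≤ Real.sqrt (R^2 - r^2) := by
  have hinner : 0 ≤ ⟪θ - θh, θh - c⟫ :=
    inner_nonneg_of_forall_norm_le_norm_add_smul fun t ht => by
      have hpoint : (1 - (1 - t)) • θ + (1 - t) • θh - c = θh - c + t • (θ - θh) := by module
      rw [← hpoint]
      exact hclosest (1 - t) ⟨by linarith [ht.2], by linarith [ht.1]⟩
  have hfar : ‖θ - c‖ ≤ R := by simpa using (hseg 0 (left_mem_Icc.2 zero_le_one)).2
  have hnear : r ≤ ‖θh - c‖ := by simpa using (hseg 1 (right_mem_Icc.2 zero_le_one)).1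
  have hobtuse := norm_sq_add_norm_sq_le_norm_add_sq_of_inner_nonneg hinner
  rw [sub_add_sub_cancel] at hobtuse
  apply Real.le_sqrt_of_sq_le
  nlinarith [pow_le_pow_left₀ hr hnear 2, pow_le_pow_left₀ (norm_nonneg _) hfar 2]

/-- geometric annulus lemma. If the segment `[θ, θ̂]` lies in the
annulus `{z : r ≤ ‖z − c‖ ≤ R}` and `θ̂` is a closest point of the segment to `c`,
then `‖θ − θ̂‖ ≤ √(R² − r²)`. -/
theorem annulus_segment_bound {n : ℕ}
    (c θ θh : EuclideanSpace ℝ (Fin n)) (r R : ℝ)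
    (hr : 0 ≤ r) (hrR : r ≤ R)
    (hseg : ∀ t ∈ Set.Icc (0:ℝ) 1,
      r ≤ ‖(1 - t) • θ + t • θh - c‖ ∧ ‖(1 - t) • θ + t • θh - c‖ ≤ R)
    (hclosest : ∀ t ∈ Set.Icc (0:ℝ) 1,
      ‖θh - c‖ ≤ ‖(1 - t) • θ + t • θh - c‖) :
    ‖θ - θh‖ ≤ Real.sqrt (R^2 - r^2) :=
  annulus_segment_bound_general c θ θh r R hr hseg hclosest
end

section
/- The duality gap dominates the GAP SAFE radius: for any β ∈ ℝᵖ and θ ∈ Δ_X, R² − r² ≤ (2/λ²)·G_λ(β, θ), where R = ‖θ − y/λ‖, r = (1/λ)√((‖y‖² − ‖Xβ − y‖² − 2λ‖β‖₁)₊), and G_λ(β,θ) = P_λ(β) − D_λ(θ) is the duality gap. -/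
lemma div_sq_le_sq_one_div_mul_sqrt_max_zero (A lam : ℝ) :
    A / lam ^ 2 ≤ ((1 / lam) * Real.sqrt (max A 0)) ^ 2 := by
  rw [mul_pow, Real.sq_sqrt (le_max_right A 0), one_div_pow, one_div_mul_eq_div]
  exact div_le_div_of_nonneg_right (le_max_left A 0) (sq_nonneg lam)

lemma two_div_sq_mul_duality_gap_eq {lam : ℝ} (hlam : lam ≠ 0) (loss penalty Y S : ℝ) :
    (2 / lam ^ 2) * (((1 / 2) * loss + lam * penalty) - ((1 / 2) * Y - (lam ^ 2 / 2) * S))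
      = S - (Y - loss - 2 * lam * penalty) / lam ^ 2 := by
  field_simp
  ring

theorem lasso_gap_dominates_radius_general {n p : ℕ}
    (X : Matrix (Fin n) (Fin p) ℝ) (y : EuclideanSpace ℝ (Fin n))
    (lam : ℝ) (hlam : 0 < lam)
    (β : Fin p → ℝ) (θ : EuclideanSpace ℝ (Fin n))
    (r R G : ℝ)
    (hr : r = (1/lam) * Real.sqrt
      (max (‖y‖^2 - ‖toE (X.mulVec β) - y‖^2 - 2 * lam * ∑ j, |β j|) 0))
    (hR : R = ‖θ - (1/lam) • y‖)
    (hG : G = ((1/2) * ‖toE (X.mulVec β) - y‖^2 + lam * ∑ j, |β j|)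
            - ((1/2) * ‖y‖^2 - (lam^2/2) * ‖θ - (1/lam) • y‖^2)) :
    R^2 - r^2 ≤ (2/lam^2) * G := by
  subst hr hR hG
  rw [two_div_sq_mul_duality_gap_eq hlam.ne']
  linarith [div_sq_le_sq_one_div_mul_sqrt_max_zero
    (‖y‖^2 - ‖toE (X.mulVec β) - y‖^2 - 2 * lam * ∑ j, |β j|) lam]

/-- Proposition 1: the duality gap dominates the GAP SAFE radius:
`R² − r² ≤ (2/λ²)·G_λ(β,θ)` with `R = ‖θ − y/λ‖`,
`r = (1/λ)√((‖y‖² − ‖Xβ − y‖² − 2λ‖β‖₁)₊)` and `G_λ(β,θ) = P_λ(β) − D_λ(θ)`. -/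
theorem lasso_gap_dominates_radius {n p : ℕ}
    (X : Matrix (Fin n) (Fin p) ℝ) (y : EuclideanSpace ℝ (Fin n))
    (lam : ℝ) (hlam : 0 < lam)
    (β : Fin p → ℝ) (θ : EuclideanSpace ℝ (Fin n))
    (hθ : ∀ j, |∑ i, X i j * θ i| ≤ 1)
    (r R G : ℝ)
    (hr : r = (1/lam) * Real.sqrt
      (max (‖y‖^2 - ‖toE (X.mulVec β) - y‖^2 - 2 * lam * ∑ j, |β j|) 0))
    (hR : R = ‖θ - (1/lam) • y‖)
    (hG : G = ((1/2) * ‖toE (X.mulVec β) - y‖^2 + lam * ∑ j, |β j|)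
            - ((1/2) * ‖y‖^2 - (lam^2/2) * ‖θ - (1/lam) • y‖^2)) :
    R^2 - r^2 ≤ (2/lam^2) * G :=
  lasso_gap_dominates_radius_general X y lam hlam β θ r R G hr hR hG
end

section
/- Finite-time support identification (Theorem 1): let (C_k) be a sequence of closed convex sets each containing the dual optimal solution θ̂, with diameters converging to 0. Define the estimated active set A_k = {j ∈ [p] : sup_{θ ∈ C_k} |x_jᵀθ| ≥ 1} and the equicorrelation set E = {j : |x_jᵀθ̂| = 1}. Then there exists k₀ such that A_k = E for all k ≥ k₀. -/
open scoped BigOperators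

lemma euclid_coord_abs_le {n : ℕ} (x : EuclideanSpace ℝ (Fin n)) (i : Fin n) :
    |x i| ≤ ‖x‖ := by
  rw [EuclideanSpace.norm_eq]
  rw [Real.le_sqrt (abs_nonneg _)]
  · have h := Finset.single_le_sum (f := fun j => ‖x j‖ ^ 2)
      (fun j _ => sq_nonneg _) (Finset.mem_univ i)
    simpa [Real.norm_eq_abs, sq_abs] using h
  · positivity

/-- Theorem 1: finite-time support identification. If `(C_k)` are
closed convex sets containing the dual optimal `θ̂`, with diameters tending to 0,
then the estimated active sets `A_k = {j : sup_{θ ∈ C_k} |x_jᵀθ| ≥ 1}` equal the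
equicorrelation set `E = {j : |x_jᵀθ̂| = 1}` for all `k` large enough. -/
theorem converging_safe_regions_identify_support {n p : ℕ}
    (X : Matrix (Fin n) (Fin p) ℝ)
    (θh : EuclideanSpace ℝ (Fin n))
    (hθh : ∀ j, |∑ i, X i j * θh i| ≤ 1)
    (C : ℕ → Set (EuclideanSpace ℝ (Fin n)))
    (hclosed : ∀ k, IsClosed (C k))
    (hconv : ∀ k, Convex ℝ (C k))
    (hmem : ∀ k, θh ∈ C k)
    (hdiam : Filter.Tendsto (fun k => EMetric.diam (C k)) Filter.atTop (nhds 0)) :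
    ∃ k₀ : ℕ, ∀ k ≥ k₀,
      {j : Fin p | 1 ≤ ⨆ θ ∈ C k, |∑ i, X i j * θ i|}
        = {j : Fin p | |∑ i, X i j * θh i| = 1} := by
  classical
  -- column absolute sums
  set B : Fin p → ℝ := fun j => ∑ i, |X i j| with hBdef
  have hB0 : ∀ j, 0 ≤ B j := fun j => Finset.sum_nonneg fun i _ => abs_nonneg _
  -- Lipschitz bound
  have hlip : ∀ (j : Fin p) (θ : EuclideanSpace ℝ (Fin n)),
      |(∑ i, X i j * θ i) - ∑ i, X i j * θh i| ≤ B j * dist θ θh := by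
    intro j θ
    have h1 : (∑ i, X i j * θ i) - ∑ i, X i j * θh i
        = ∑ i, X i j * (θ i - θh i) := by
      rw [← Finset.sum_sub_distrib]
      exact Finset.sum_congr rfl fun i _ => by ring
    rw [h1]
    calc |∑ i, X i j * (θ i - θh i)| ≤ ∑ i, |X i j * (θ i - θh i)| :=
          Finset.abs_sum_le_sum_abs _ _
      _ ≤ ∑ i, |X i j| * dist θ θh := by
          refine Finset.sum_le_sum fun i _ => ?_
          rw [abs_mul]
          refine mul_le_mul_of_nonneg_left ?_ (abs_nonneg _)
          have := euclid_coord_abs_le (θ - θh) i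
          simpa [dist_eq_norm] using this
      _ = B j * dist θ θh := by rw [← Finset.sum_mul]
  -- choose ε
  set g : Fin p → ℝ := fun j =>
    if |∑ i, X i j * θh i| < 1 then (1 - |∑ i, X i j * θh i|) / (2 * (B j + 1)) else 1
    with hgdef
  have hgpos : ∀ j, 0 < g j := by
    intro j
    by_cases h : |∑ i, X i j * θh i| < 1
    · simp only [hgdef, if_pos h]
      have h2 : (0:ℝ) < 2 * (B j + 1) := by linarith [hB0 j]
      exact div_pos (by linarith) h2
    · simp [hgdef, if_neg h]
  set s : Finset ℝ := insert 1 (Finset.univ.image g) with hsdef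
  have hsne : s.Nonempty := ⟨1, by simp [hsdef]⟩
  set ε : ℝ := s.min' hsne with hεdef
  have hε0 : 0 < ε := by
    rw [hεdef, Finset.lt_min'_iff]
    intro b hb
    rw [hsdef, Finset.mem_insert] at hb
    rcases hb with rfl | hb
    · norm_num
    · obtain ⟨j, _, rfl⟩ := Finset.mem_image.mp hb
      exact hgpos j
  have hεj : ∀ j, |∑ i, X i j * θh i| < 1 →
      |∑ i, X i j * θh i| + (B j + 1) * ε < 1 := by
    intro j hj
    have hle : ε ≤ g j := Finset.min'_le _ _ (by
      rw [hsdef]; exact Finset.mem_insert_of_mem (Finset.mem_image_of_mem g (Finset.mem_univ j)))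
    have hBj : (0:ℝ) < B j + 1 := by linarith [hB0 j]
    have : (B j + 1) * ε ≤ (1 - |∑ i, X i j * θh i|) / 2 := by
      have hgj : g j = (1 - |∑ i, X i j * θh i|) / (2 * (B j + 1)) := by
        simp [hgdef, if_pos hj]
      calc (B j + 1) * ε ≤ (B j + 1) * g j :=
            mul_le_mul_of_nonneg_left hle (le_of_lt hBj)
        _ = (1 - |∑ i, X i j * θh i|) / 2 := by
            rw [hgj]; field_simp
    linarith
  -- eventual smallness of diameter
  have hev : ∀ᶠ k in Filter.atTop, EMetric.diam (C k) < ENNReal.ofReal ε :=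
    hdiam.eventually (gt_mem_nhds (by simp [ENNReal.ofReal_pos, hε0]))
  rw [Filter.eventually_atTop] at hev
  obtain ⟨k₀, hk₀⟩ := hev
  refine ⟨k₀, fun k hk => ?_⟩
  have hdsmall := hk₀ k hk
  -- distance bound inside C k
  have hdist : ∀ θ ∈ C k, dist θ θh < ε := by
    intro θ hθ
    have h1 : edist θ θh ≤ EMetric.diam (C k) :=
      EMetric.edist_le_diam_of_mem hθ (hmem k)
    have h2 : edist θ θh < ENNReal.ofReal ε := lt_of_le_of_lt h1 hdsmall
    rw [edist_dist] at h2
    exact (ENNReal.ofReal_lt_ofReal_iff hε0).mp h2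
  -- upper bound for all points of C k
  have hub : ∀ (j : Fin p) (θ : EuclideanSpace ℝ (Fin n)), θ ∈ C k →
      |∑ i, X i j * θ i| ≤ |∑ i, X i j * θh i| + (B j + 1) * ε := by
    intro j θ hθ
    have h1 := hlip j θ
    have h2 : B j * dist θ θh ≤ (B j + 1) * ε := by
      have := (hdist θ hθ)
      have hd0 : 0 ≤ dist θ θh := dist_nonneg
      nlinarith [hB0 j]
    calc |∑ i, X i j * θ i|
        ≤ |∑ i, X i j * θh i| + |(∑ i, X i j * θ i) - ∑ i, X i j * θh i| := by
          have := abs_sub_abs_le_abs_sub (∑ i, X i j * θ i) (∑ i, X i j * θh i)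
          linarith [abs_nonneg ((∑ i, X i j * θ i) - ∑ i, X i j * θh i)]
      _ ≤ |∑ i, X i j * θh i| + (B j + 1) * ε := by linarith
  have hMnn : ∀ j : Fin p, 0 ≤ |∑ i, X i j * θh i| + (B j + 1) * ε := by
    intro j
    have := hB0 j
    have := abs_nonneg (∑ i, X i j * θh i)
    nlinarith [hε0.le]
  -- supremum bounds
  have hsup_le : ∀ j : Fin p,
      (⨆ θ ∈ C k, |∑ i, X i j * θ i|) ≤ |∑ i, X i j * θh i| + (B j + 1) * ε := by
    intro j
    refine Real.iSup_le (fun θ => Real.iSup_le (fun hθ => hub j θ hθ) (hMnn j)) (hMnn j)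
  have hsup_ge : ∀ j : Fin p,
      |∑ i, X i j * θh i| ≤ ⨆ θ ∈ C k, |∑ i, X i j * θ i| := by
    intro j
    have hbdd : BddAbove (Set.range fun θ => ⨆ _ : θ ∈ C k, |∑ i, X i j * θ i|) := by
      refine ⟨|∑ i, X i j * θh i| + (B j + 1) * ε, ?_⟩
      rintro _ ⟨θ, rfl⟩
      exact Real.iSup_le (fun hθ => hub j θ hθ) (hMnn j)
    have h1 : (⨆ _ : θh ∈ C k, |∑ i, X i j * θh i|) = |∑ i, X i j * θh i| :=
      ciSup_pos (hmem k)
    rw [← h1]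
    exact le_ciSup hbdd θh
  ext j
  simp only [Set.mem_setOf_eq]
  constructor
  · intro h1
    by_contra hne
    have hlt : |∑ i, X i j * θh i| < 1 := lt_of_le_of_ne (hθh j) hne
    have := hsup_le j
    have := hεj j hlt
    linarith
  · intro he
    calc (1:ℝ) = |∑ i, X i j * θh i| := he.symm
      _ ≤ _ := hsup_ge j
end

section
/- Sequential gap recurrence (Proposition 3): for tuning parameters λ_{t−1} ≥ λ_t > 0 and any (β, θ) ∈ ℝᵖ × Δ_X, the rescaled duality gaps satisfy (2/λ_t²)·G_{λ_t}(β,θ) = (1 − λ_t/λ_{t−1})·‖(Xβ − y)/λ_t‖² − (λ_{t−1}/λ_t − 1)·‖θ‖² + (2/(λ_{t−1}λ_t))·G_{λ_{t−1}}(β,θ). -/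
open scoped BigOperators

/-- Proposition 3: sequential gap recurrence. For
`λ_{t-1} ≥ λ_t > 0` and `(β, θ) ∈ ℝᵖ × Δ_X`,
`(2/λ_t²)G_{λ_t}(β,θ) = (1 − λ_t/λ_{t-1})‖(Xβ − y)/λ_t‖² − (λ_{t-1}/λ_t − 1)‖θ‖²
 + (2/(λ_{t-1}λ_t))G_{λ_{t-1}}(β,θ)`. -/
theorem lasso_sequential_gap_recurrence {n p : ℕ}
    (X : Matrix (Fin n) (Fin p) ℝ) (y : EuclideanSpace ℝ (Fin n))
    (lamt1 lamt : ℝ) (hlamt : 0 < lamt) (hle : lamt ≤ lamt1)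
    (β : Fin p → ℝ) (θ : EuclideanSpace ℝ (Fin n))
    (hθ : ∀ j, |∑ i, X i j * θ i| ≤ 1)
    (G : ℝ → ℝ)
    (hG : ∀ lam, G lam = ((1/2) * ‖toE (X.mulVec β) - y‖^2 + lam * ∑ j, |β j|)
            - ((1/2) * ‖y‖^2 - (lam^2/2) * ‖θ - (1/lam) • y‖^2)) :
    (2/lamt^2) * G lamt
      = (1 - lamt/lamt1) * ‖(1/lamt) • (toE (X.mulVec β) - y)‖^2
        - (lamt1/lamt - 1) * ‖θ‖^2
        + (2/(lamt1 * lamt)) * G lamt1 := by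
  have hlamt1 : 0 < lamt1 := lt_of_lt_of_le hlamt hle
  have hsq : ∀ lam : ℝ, lam ≠ 0 →
      ‖θ - (1/lam) • y‖^2 = ‖θ‖^2 - 2 * ((1/lam) * inner ℝ θ y) + (1/lam)^2 * ‖y‖^2 := by
    intro lam hlam
    rw [norm_sub_sq_real, real_inner_smul_right, norm_smul, mul_pow]
    simp [abs_of_pos, sq_abs]
  have h1 := hsq lamt hlamt.ne'
  have h2 := hsq lamt1 hlamt1.ne'
  have h3 : ‖(1/lamt) • (toE (X.mulVec β) - y)‖^2
      = (1/lamt)^2 * ‖toE (X.mulVec β) - y‖^2 := by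
    rw [norm_smul, mul_pow, Real.norm_eq_abs, sq_abs]
  rw [hG lamt, hG lamt1, h1, h2, h3]
  field_simp
  ring
end

section
/- Sequential rule comparison: if β is primal optimal and θ = (y − Xβ)/λ_{t−1} is the dual optimal solution at λ_{t−1} (so G_{λ_{t−1}}(β,θ)=0), then (2/λ_t²)·G_{λ_t}(β,θ) = ((λ_{t−1}²/λ_t²)(1 − λ_t/λ_{t−1}) − (λ_{t−1}/λ_t − 1))·‖θ‖² ≤ (1/λ_t − 1/λ_{t−1})²·‖y‖². -/
/-! Substituting `Xβ - y = -λ_{t-1} θ` turns the duality gap into the quadratic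
`G(λ) = ½(λ_{t-1}² + λ²)‖θ‖² + λ (‖β‖₁ - ⟪θ, y⟫)` in `λ`. Its root at `λ_{t-1}` forces
`‖β‖₁ - ⟪θ, y⟫ = -λ_{t-1}‖θ‖²`, so `G(λ) = ½(λ_{t-1} - λ)²‖θ‖²`, and the bound follows from
`‖θ‖ ≤ ‖y‖/λ_{t-1}`. -/

open scoped BigOperators

open scoped RealInnerProductSpace

lemma sub_eq_neg_smul_of_eq_inv_smul_sub {K M : Type*} [Field K] [AddCommGroup M] [Module K M]
    {r y θ : M} {ℓ : K} (hℓ : ℓ ≠ 0) (hθ : θ = (1 / ℓ) • (y - r)) : r - y = -(ℓ • θ) := by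
  rw [hθ, smul_smul, mul_one_div_cancel hℓ, one_smul, neg_sub]

section DualityGap

variable {E : Type*} [NormedAddCommGroup E] [InnerProductSpace ℝ E]

lemma sq_mul_norm_sub_inv_smul (θ y : E) {lam : ℝ} (hlam : lam ≠ 0) :
    lam ^ 2 * ‖θ - (1 / lam) • y‖ ^ 2 = lam ^ 2 * ‖θ‖ ^ 2 - 2 * lam * ⟪θ, y⟫ + ‖y‖ ^ 2 := by
  rw [norm_sub_sq_real, real_inner_smul_right, norm_smul, mul_pow, Real.norm_eq_abs, sq_abs]
  field_simp

lemma dualityGap_eq_of_residual (θ y : E) (ℓ c : ℝ) {lam : ℝ} (hlam : lam ≠ 0) :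
    ((1 / 2) * ‖-(ℓ • θ)‖ ^ 2 + lam * c) - ((1 / 2) * ‖y‖ ^ 2 - (lam ^ 2 / 2) * ‖θ - (1 / lam) • y‖ ^ 2)
      = (1 / 2) * (ℓ ^ 2 + lam ^ 2) * ‖θ‖ ^ 2 + lam * (c - ⟪θ, y⟫) := by
  have h := sq_mul_norm_sub_inv_smul θ y hlam
  rw [norm_neg, norm_smul, mul_pow, Real.norm_eq_abs, sq_abs]
  linear_combination (1 / 2 : ℝ) * h

end DualityGap

lemma quadratic_eq_half_sq_sub_of_root {ℓ t d : ℝ} (hℓ : ℓ ≠ 0)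
    (hroot : (1 / 2) * (ℓ ^ 2 + ℓ ^ 2) * t + ℓ * d = 0) (lam : ℝ) :
    (1 / 2) * (ℓ ^ 2 + lam ^ 2) * t + lam * d = (1 / 2) * (ℓ - lam) ^ 2 * t := by
  have hd : d = -(ℓ * t) := mul_left_cancel₀ hℓ (by linear_combination hroot)
  rw [hd]
  ring

/-- sequential rule comparison. If `θ = (y − Xβ)/λ_{t-1}` is the
dual optimal at `λ_{t-1}` (so `G_{λ_{t-1}}(β,θ) = 0` and `‖θ‖ ≤ ‖y‖/λ_{t-1}`), then
`(2/λ_t²)G_{λ_t}(β,θ) = ((λ_{t-1}²/λ_t²)(1 − λ_t/λ_{t-1}) − (λ_{t-1}/λ_t − 1))‖θ‖²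
 ≤ (1/λ_t − 1/λ_{t-1})²‖y‖²`. -/
theorem lasso_sequential_rule_comparison {n p : ℕ}
    (X : Matrix (Fin n) (Fin p) ℝ) (y : EuclideanSpace ℝ (Fin n))
    (lamt1 lamt : ℝ) (hlamt : 0 < lamt) (hle : lamt ≤ lamt1)
    (β : Fin p → ℝ) (θ : EuclideanSpace ℝ (Fin n))
    (hθ : θ = (1/lamt1) • (y - toE (X.mulVec β)))
    (G : ℝ → ℝ)
    (hG : ∀ lam, G lam = ((1/2) * ‖toE (X.mulVec β) - y‖^2 + lam * ∑ j, |β j|)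
            - ((1/2) * ‖y‖^2 - (lam^2/2) * ‖θ - (1/lam) • y‖^2))
    (hG0 : G lamt1 = 0)
    (hnorm : ‖θ‖ ≤ ‖y‖ / lamt1) :
    (2/lamt^2) * G lamt
      = ((lamt1^2/lamt^2) * (1 - lamt/lamt1) - (lamt1/lamt - 1)) * ‖θ‖^2 ∧
    (2/lamt^2) * G lamt ≤ (1/lamt - 1/lamt1)^2 * ‖y‖^2 := by
  have hlamt1 : 0 < lamt1 := hlamt.trans_le hle
  have hres := sub_eq_neg_smul_of_eq_inv_smul_sub hlamt1.ne' hθ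
  have hquad : ∀ lam ≠ 0, G lam
      = (1 / 2) * (lamt1 ^ 2 + lam ^ 2) * ‖θ‖ ^ 2 + lam * ((∑ j, |β j|) - ⟪θ, y⟫) :=
    fun lam hlam => by rw [hG, hres, dualityGap_eq_of_residual θ y _ _ hlam]
  have hGt : (2 / lamt ^ 2) * G lamt = ((lamt1 - lamt) / lamt) ^ 2 * ‖θ‖ ^ 2 := by
    rw [hquad lamt hlamt.ne', quadratic_eq_half_sq_sub_of_root hlamt1.ne'
      ((hquad lamt1 hlamt1.ne').symm.trans hG0)]
    field_simp
  refine ⟨by rw [hGt]; field_simp, ?_⟩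
  calc (2 / lamt ^ 2) * G lamt
      ≤ ((lamt1 - lamt) / lamt) ^ 2 * (‖y‖ / lamt1) ^ 2 := by
        rw [hGt]; gcongr
    _ = (1 / lamt - 1 / lamt1) ^ 2 * ‖y‖ ^ 2 := by field_simp
end
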